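/- Let p ≥ 3 and k ≥ 1 be integers and a, b ∈ ℝ with 0 < b ≤ p-2 and k/2 + a + 1 > 0. For w > 0 define r(w) = w · [∫_0^1 λ^{b/2} (1-λ)^{p/2 - b/2 - 1} (1 + wλ)^{-k/2 - a - b/2 - 2} dλ] / [∫_0^1 λ^{b/2 - 1} (1-λ)^{p/2 - b/2 - 1} (1 + wλ)^{-k/2 - a - b/2 - 2} dλ]. Then 0 < r(w) ≤ b/(k + 2a + 2) for all w > 0. (Lemma 6.3, part 2.) -/

import Mathlib

/-!
Write `K_α(λ) = λ^α (1-λ)^q (1+wλ)^γ` with `q = p/2 - b/2 - 1 ≥ 0` and `γ = -k/2 - a - b/2 - 2`,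
so that `r(w) = w ∫₀¹ K_{b/2} / ∫₀¹ K_{b/2-1}` and both integrals are positive. Integrating by
parts against `F(λ) = λ^{b/2} (1-λ)^q (1+wλ)^{γ+1}`, which vanishes at `0` and is nonnegative
at `1`, and using `(1+wλ) K_{b/2-1} = K_{b/2-1} + w K_{b/2}`, gives
`F' = (b/2) K_{b/2-1} - (k/2+a+1) w K_{b/2} - q λ^{b/2} (1-λ)^{q-1} (1+wλ)^{γ+1}`.
The last term is nonnegative, hence `(k/2+a+1) w ∫₀¹ K_{b/2} ≤ (b/2) ∫₀¹ K_{b/2-1}`,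
which is `r(w) ≤ b/(k+2a+2)`.
-/

open MeasureTheory Real

/-- The shrinkage factor `r(w)` of the generalized Bayes estimator `(1 - r(W)/W)X`,
`W = ‖X‖²/‖U‖²`, corresponding to the prior with density proportional to `η^a ‖θ‖^{-b}`:
`r(w) = w ⬝ [∫₀¹ λ^{b/2} (1-λ)^{p/2-b/2-1} (1+wλ)^{-k/2-a-b/2-2} dλ] /
  [∫₀¹ λ^{b/2-1} (1-λ)^{p/2-b/2-1} (1+wλ)^{-k/2-a-b/2-2} dλ]`. -/
noncomputable def rshrink (p k : ℕ) (a b : ℝ) (w : ℝ) : ℝ :=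
  w * (∫ l in Set.Ioo (0 : ℝ) 1,
        l ^ (b / 2) * (1 - l) ^ ((p : ℝ) / 2 - b / 2 - 1) *
          (1 + w * l) ^ (-(k : ℝ) / 2 - a - b / 2 - 2)) /
    ∫ l in Set.Ioo (0 : ℝ) 1,
      l ^ (b / 2 - 1) * (1 - l) ^ ((p : ℝ) / 2 - b / 2 - 1) *
        (1 + w * l) ^ (-(k : ℝ) / 2 - a - b / 2 - 2)

open Set

lemma one_add_mul_pos_of_mem_Icc {w l : ℝ} (hw : -1 < w) (hl : l ∈ Icc (0 : ℝ) 1) :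
    0 < 1 + w * l := by
  rcases le_or_gt 0 w with hw0 | hw0
  · nlinarith [hl.1]
  · nlinarith [hl.2]

lemma continuousOn_one_add_mul_rpow {w : ℝ} (γ : ℝ) (hw : -1 < w) :
    ContinuousOn (fun l : ℝ => (1 + w * l) ^ γ) (Icc 0 1) :=
  ContinuousOn.rpow_const (by fun_prop) fun _ hl => Or.inl (one_add_mul_pos_of_mem_Icc hw hl).ne'

noncomputable def hypergeomIntegrand (α β γ w l : ℝ) : ℝ :=
  l ^ α * (1 - l) ^ β * (1 + w * l) ^ γ

namespace hypergeomIntegrand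

variable {α β γ w l : ℝ}

lemma nonneg (hw : -1 < w) (hl : l ∈ Icc (0 : ℝ) 1) : 0 ≤ hypergeomIntegrand α β γ w l := by
  have := one_add_mul_pos_of_mem_Icc hw hl
  have : 0 ≤ 1 - l := by linarith [hl.2]
  have := hl.1
  unfold hypergeomIntegrand
  positivity

lemma pos (hw : -1 < w) (hl : l ∈ Ioo (0 : ℝ) 1) : 0 < hypergeomIntegrand α β γ w l := by
  have := one_add_mul_pos_of_mem_Icc hw (Ioo_subset_Icc_self hl)
  have : 0 < 1 - l := by linarith [hl.2]
  have := hl.1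
  unfold hypergeomIntegrand
  positivity

lemma continuousOn (hα : 0 ≤ α) (hβ : 0 ≤ β) (hw : -1 < w) :
    ContinuousOn (hypergeomIntegrand α β γ w) (Icc 0 1) :=
  ((continuousOn_id.rpow_const fun _ _ => Or.inr hα).mul
    ((continuousOn_const.sub continuousOn_id).rpow_const fun _ _ => Or.inr hβ)).mul
    (continuousOn_one_add_mul_rpow γ hw)

/-- Near each endpoint only one of the two singular factors is singular, and it is integrable
there since its exponent exceeds `-1`. -/
lemma intervalIntegrable (hα : -1 < α) (hβ : -1 < β) (hw : -1 < w) :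
    IntervalIntegrable (hypergeomIntegrand α β γ w) volume 0 1 := by
  have left : IntervalIntegrable (hypergeomIntegrand α β γ w) volume 0 (1 / 2) := by
    have hc : ContinuousOn (fun l : ℝ => (1 - l) ^ β * (1 + w * l) ^ γ) (uIcc 0 (1 / 2)) := by
      rw [uIcc_of_le (by norm_num)]
      refine ((continuousOn_const.sub continuousOn_id).rpow_const fun l hl => ?_).mul
        ((continuousOn_one_add_mul_rpow γ hw).mono (Icc_subset_Icc_right (by norm_num)))
      exact Or.inl (by linarith [hl.2] : (0 : ℝ) < 1 - l).ne'
    convert (intervalIntegral.intervalIntegrable_rpow' hα).mul_continuousOn hc using 1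
    funext l
    exact mul_assoc _ _ _
  have right : IntervalIntegrable (hypergeomIntegrand α β γ w) volume (1 / 2) 1 := by
    have hc : ContinuousOn (fun l : ℝ => l ^ α * (1 + w * l) ^ γ) (uIcc (1 / 2) 1) := by
      rw [uIcc_of_le (by norm_num)]
      refine (continuousOn_id.rpow_const fun l hl => ?_).mul
        ((continuousOn_one_add_mul_rpow γ hw).mono (Icc_subset_Icc_left (by norm_num)))
      exact Or.inl (by linarith [hl.1] : (0 : ℝ) < l).ne'
    have h := ((intervalIntegral.intervalIntegrable_rpow' hβ (a := 0) (b := 1 / 2)).comp_sub_left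
      1).symm
    norm_num at h
    convert h.mul_continuousOn hc using 1
    funext l
    simp only [hypergeomIntegrand]
    ring
  exact left.trans right

lemma integrableOn_Ioo (hα : -1 < α) (hβ : -1 < β) (hw : -1 < w) :
    IntegrableOn (hypergeomIntegrand α β γ w) (Ioo 0 1) :=
  (intervalIntegrable_iff_integrableOn_Ioo_of_le zero_le_one).1 (intervalIntegrable hα hβ hw)

lemma integral_pos (hα : -1 < α) (hβ : -1 < β) (hw : -1 < w) :
    0 < ∫ l in Ioo 0 1, hypergeomIntegrand α β γ w l := by
  refine setIntegral_pos_iff_support_of_nonneg_ae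
    (ae_restrict_of_forall_mem measurableSet_Ioo fun _ hl => (pos hw hl).le)
    (integrableOn_Ioo hα hβ hw) |>.2 ?_
  exact (by simp : (0 : ENNReal) < volume (Ioo (0 : ℝ) 1)).trans_le
    (measure_mono fun _ hl => ⟨(pos hw hl).ne', hl⟩)

lemma hasDerivAt (hw : -1 < w) (hl : l ∈ Ioo (0 : ℝ) 1) :
    HasDerivAt (hypergeomIntegrand α β (γ + 1) w)
      (α * hypergeomIntegrand (α - 1) β γ w l + (α + γ + 1) * w * hypergeomIntegrand α β γ w l
        - β * hypergeomIntegrand α (β - 1) (γ + 1) w l) l := by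
  have hl0 : 0 < l := hl.1
  have h1l : 0 < 1 - l := by linarith [hl.2]
  have hwl := one_add_mul_pos_of_mem_Icc hw (Ioo_subset_Icc_self hl)
  have d1 : HasDerivAt (fun l : ℝ => l ^ α) (α * l ^ (α - 1)) l :=
    hasDerivAt_rpow_const (Or.inl hl0.ne')
  have d2 : HasDerivAt (fun l : ℝ => (1 - l) ^ β) (-1 * β * (1 - l) ^ (β - 1)) l :=
    ((hasDerivAt_id l).const_sub 1).rpow_const (Or.inl h1l.ne')
  have d3 : HasDerivAt (fun l : ℝ => (1 + w * l) ^ (γ + 1)) (w * (γ + 1) * (1 + w * l) ^ γ) l := by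
    simpa using (((hasDerivAt_id l).const_mul w).const_add 1).rpow_const (p := γ + 1)
      (Or.inl hwl.ne')
  refine ((d1.mul d2).mul d3 : HasDerivAt (hypergeomIntegrand α β (γ + 1) w) _ l).congr_deriv ?_
  have e1 : l ^ α = l ^ (α - 1) * l := by rw [← rpow_add_one hl0.ne']; ring_nf
  have e2 : (1 - l) ^ β = (1 - l) ^ (β - 1) * (1 - l) := by rw [← rpow_add_one h1l.ne']; ring_nf
  have e3 : (1 + w * l) ^ (γ + 1) = (1 + w * l) ^ γ * (1 + w * l) := rpow_add_one hwl.ne' γ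
  simp only [hypergeomIntegrand, Pi.mul_apply, e1, e2, e3]
  ring

theorem neg_mul_integral_le (hα : 0 < α) (hβ : 0 ≤ β) (hw : -1 < w) :
    -(α + γ + 1) * w * ∫ l in Ioo 0 1, hypergeomIntegrand α β γ w l ≤
      α * ∫ l in Ioo 0 1, hypergeomIntegrand (α - 1) β γ w l := by
  have hint₀ := (intervalIntegrable (β := β) (γ := γ) (by linarith : -1 < α - 1) (by linarith)
    hw).const_mul α
  have hint₁ := (intervalIntegrable (β := β) (γ := γ) (by linarith : -1 < α) (by linarith)
    hw).const_mul ((α + γ + 1) * w)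
  have hFTC := intervalIntegral.sub_le_integral_of_hasDeriv_right_of_le zero_le_one
    (continuousOn (γ := γ + 1) hα.le hβ hw) (fun l hl => (hasDerivAt hw hl).hasDerivWithinAt)
    ((intervalIntegrable_iff_integrableOn_Icc_of_le zero_le_one).1 (hint₀.add hint₁))
    (fun l hl => sub_le_self _ (mul_nonneg hβ (nonneg hw (Ioo_subset_Icc_self hl))))
  have hF0 : hypergeomIntegrand α β (γ + 1) w 0 = 0 := by
    simp [hypergeomIntegrand, zero_rpow hα.ne']
  have hF1 := nonneg (α := α) (β := β) (γ := γ + 1) hw (right_mem_Icc.2 zero_le_one)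
  rw [intervalIntegral.integral_add hint₀ hint₁, intervalIntegral.integral_const_mul,
    intervalIntegral.integral_const_mul, intervalIntegral.integral_of_le zero_le_one,
    intervalIntegral.integral_of_le zero_le_one, integral_Ioc_eq_integral_Ioo,
    integral_Ioc_eq_integral_Ioo] at hFTC
  linarith

end hypergeomIntegrand

theorem rshrink_bounds_general (p k : ℕ) (a b : ℝ)
    (hb0 : 0 < b) (hbp : b ≤ (p : ℝ) - 2) (ha : (k : ℝ) / 2 + a + 1 > 0) :
    ∀ w : ℝ, 0 < w →
      0 < rshrink p k a b w ∧ rshrink p k a b w ≤ b / ((k : ℝ) + 2 * a + 2) := by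
  intro w hw
  have hβ : 0 ≤ (p : ℝ) / 2 - b / 2 - 1 := by linarith
  set β : ℝ := (p : ℝ) / 2 - b / 2 - 1
  set γ : ℝ := -(k : ℝ) / 2 - a - b / 2 - 2
  have hr : rshrink p k a b w = w * (∫ l in Ioo 0 1, hypergeomIntegrand (b / 2) β γ w l) /
      ∫ l in Ioo 0 1, hypergeomIntegrand (b / 2 - 1) β γ w l := rfl
  have hw' : -1 < w := by linarith
  have hI₁ := hypergeomIntegrand.integral_pos (β := β) (γ := γ) (by linarith : -1 < b / 2)
    (by linarith) hw'
  have hI₀ := hypergeomIntegrand.integral_pos (β := β) (γ := γ) (by linarith : -1 < b / 2 - 1)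
    (by linarith) hw'
  have hkey := hypergeomIntegrand.neg_mul_integral_le (γ := γ) (by positivity : 0 < b / 2) hβ hw'
  rw [show -(b / 2 + γ + 1) = (k : ℝ) / 2 + a + 1 by ring] at hkey
  rw [hr]
  refine ⟨by positivity, ?_⟩
  rw [div_le_div_iff₀ hI₀ (by linarith)]
  linarith

/-- **Lemma 6.3, part 2**: for `0 < b ≤ p - 2` and `k/2 + a + 1 > 0`, the shrinkage factor
`r` satisfies `0 < r(w) ≤ b/(k + 2a + 2)` for all `w > 0`. -/
theorem rshrink_bounds (p k : ℕ) (hp : 3 ≤ p) (hk : 1 ≤ k) (a b : ℝ)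
    (hb0 : 0 < b) (hbp : b ≤ (p : ℝ) - 2) (ha : (k : ℝ) / 2 + a + 1 > 0) :
    ∀ w : ℝ, 0 < w →
      0 < rshrink p k a b w ∧ rshrink p k a b w ≤ b / ((k : ℝ) + 2 * a + 2) :=
  rshrink_bounds_general p k a b hb0 hbp ha
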